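/- For all nonnegative integers n, the Hermite and poly-Bernoulli mixed-type polynomial satisfies HB_n^{(ν,k)}(x) = \sum_{m=0}^{\lfloor n/2 \rfloor} \binom{n}{2m} \frac{(2m)!}{m!} (-ν/2)^m B_{n-2m}^{(k)}(x). -/

import Mathlib

open PowerSeries Finset

/-- The power series e^{-t}. -/
noncomputable def expNeg : PowerSeries ℝ := rescale (-1) (PowerSeries.exp ℝ)

/-- Li_k(1-e^{-t})/(1-e^{-t}) = ∑_{m≥0} (1-e^{-t})^m/(m+1)^k as a formal power series. -/
noncomputable def pbGF (k : ℤ) : PowerSeries ℝ :=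
  PowerSeries.mk fun n => ∑ m ∈ Finset.range (n + 1),
    (1 / ((m : ℝ) + 1) ^ k) * PowerSeries.coeff n ((1 - expNeg) ^ m)

/-- The power series e^{-ν t²/2}. -/
noncomputable def hermGF (ν : ℝ) : PowerSeries ℝ :=
  PowerSeries.mk fun n =>
    if Even n then (-ν / 2) ^ (n / 2) / (Nat.factorial (n / 2)) else 0

/-- Hermite and poly-Bernoulli mixed-type polynomials. -/
noncomputable def HB (ν : ℝ) (k : ℤ) (n : ℕ) (x : ℝ) : ℝ :=
  (Nat.factorial n) *
    PowerSeries.coeff n (hermGF ν * pbGF k * rescale x (PowerSeries.exp ℝ))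

/-- Poly-Bernoulli polynomials. -/
noncomputable def pB (k : ℤ) (n : ℕ) (x : ℝ) : ℝ :=
  (Nat.factorial n) * PowerSeries.coeff n (pbGF k * rescale x (PowerSeries.exp ℝ))

/-- Hermite polynomials of order ν. -/
noncomputable def Herm (ν : ℝ) (n : ℕ) (x : ℝ) : ℝ :=
  (Nat.factorial n) * PowerSeries.coeff n (hermGF ν * rescale x (PowerSeries.exp ℝ))

/-- Stirling numbers of the second kind. -/
def S2 : ℕ → ℕ → ℕ
  | 0, 0 => 1
  | 0, _ + 1 => 0
  | _ + 1, 0 => 0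
  | n + 1, m + 1 => (m + 1) * S2 n (m + 1) + S2 n m

/-! The Hermite factor `e^{-νt²/2}` has coefficient `(-ν/2)^m / m!` in degree `2m` and none in
odd degrees, so the coefficient of `tⁿ` in the product is a sum over `m ≤ n/2` of that coefficient
times the `t^{n-2m}`-coefficient of the poly-Bernoulli series; multiplying by `n!` and writing
`n! = C(n, 2m) (2m)! (n-2m)!` gives the formula. -/

theorem Finset.sum_range_succ_ite_even {M : Type*} [AddCommMonoid M] (n : ℕ) (f : ℕ → M) :
    ∑ i ∈ range (n + 1), (if Even i then f i else 0) = ∑ m ∈ range (n / 2 + 1), f (2 * m) := by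
  rw [← sum_filter]
  refine sum_nbij' (· / 2) (2 * ·) ?_ ?_ ?_ ?_ ?_
  · intro i hi
    simp only [mem_filter, mem_range] at hi ⊢
    omega
  · intro m hm
    simp only [mem_filter, mem_range] at hm ⊢
    exact ⟨by omega, even_two_mul m⟩
  · intro i hi
    obtain ⟨r, rfl⟩ := (mem_filter.mp hi).2
    omega
  · intro m _
    omega
  · intro i hi
    obtain ⟨r, rfl⟩ := (mem_filter.mp hi).2
    congr 1
    omega

theorem PowerSeries.coeff_mk_ite_even_mul {R : Type*} [CommSemiring R] (a : ℕ → R)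
    (g : R⟦X⟧) (n : ℕ) :
    coeff n (mk (fun i => if Even i then a (i / 2) else 0) * g) =
      ∑ m ∈ range (n / 2 + 1), a m * coeff (n - 2 * m) g := by
  rw [coeff_mul, Nat.sum_antidiagonal_eq_sum_range_succ_mk]
  simp only [coeff_mk, ite_mul, zero_mul]
  rw [sum_range_succ_ite_even]
  simp only [Nat.mul_div_cancel_left _ two_pos]

theorem HB_eq_sum_polyBernoulli (ν : ℝ) (k : ℤ) (n : ℕ) (x : ℝ) :
    HB ν k n x = ∑ m ∈ Finset.range (n / 2 + 1),
      (n.choose (2 * m) : ℝ) * (Nat.factorial (2 * m)) / (Nat.factorial m) *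
        (-ν / 2) ^ m * pB k (n - 2 * m) x := by
  unfold HB pB
  rw [mul_assoc, hermGF,
    coeff_mk_ite_even_mul fun m => (-ν / 2) ^ m / (m.factorial : ℝ), mul_sum]
  refine sum_congr rfl fun m hm => ?_
  have hle : 2 * m ≤ n := by
    rw [mem_range] at hm
    omega
  rw [← Nat.choose_mul_factorial_mul_factorial hle]
  push_cast
  ring
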